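/- arXiv:2110.12762 — 3 statements merged into one kernel-verified Lean document; each statement's English description precedes it below -/
import Mathlib

section
/- Let P > 0 and let f : (−1,1) → ℝ be piecewise Lipschitz. Suppose p ∈ (1,∞), t ∈ L^p(−1,1) (extended by zero to ℝ) and u : (−1,1) → ℝ is absolutely continuous with derivative u′ ∈ L^p(−1,1), and assume: (i) 𝓗t(x) + f(x)·t(x) = u′(x) for a.e. x ∈ (−1,1); (ii) u(x) ≤ 0, t(x) ≤ 0 and u(x)·t(x) = 0 for a.e. x ∈ (−1,1); (iii) ∫_{−1}^{1} t(x) dx = −P. Then u(x) = 0 for every x ∈ (−1,1). -/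
open MeasureTheory Filter Set
open scoped Real Topology ENNReal

/-- Hilbert transform: `HT h x = -(1/π) · lim_{ε→0⁺} ∫_{|x-s|>ε} h(s)/(x-s) ds`
(the limit exists a.e. for `h ∈ Lᵖ(ℝ)` by M. Riesz's theorem). -/
noncomputable def HT (h : ℝ → ℝ) (x : ℝ) : ℝ :=
  limUnder (𝓝[>] (0:ℝ)) (fun ε : ℝ =>
    -(1 / Real.pi) * ∫ s in {s : ℝ | ε < |x - s|}, h s / (x - s))

/-- A piecewise Lipschitz function on `(-1,1)`: there is a partition
`-1 = y₀ < y₁ < ⋯ < y_m = 1` such that `f` is Lipschitz on each `(y_{j-1}, y_j)`. -/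
def PiecewiseLipschitzOn (f : ℝ → ℝ) : Prop :=
  ∃ (m : ℕ) (y : ℕ → ℝ), 0 < m ∧ y 0 = -1 ∧ y m = 1 ∧
    (∀ j, j < m → y j < y (j + 1)) ∧
    ∀ j, j < m → ∃ K : NNReal, LipschitzOnWith K f (Set.Ioo (y j) (y (j + 1)))

/-!
Suppose `u x₀ < 0` and let `(a, b) ∋ x₀` be the maximal interval on which `u < 0`. By
complementarity `t = 0` a.e. on `(a, b)`, so there the Hilbert transform is the ordinary integral
`H x = -(1/π) ∫ t s / (x - s) ds`, and since `t ≤ 0` it is antitone in `x`: the Carleman equation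
`u' = H` makes `u` concave on the gap. An endpoint inside `(-1, 1)` has `u = 0 > u x₀`, which forces
`H x₀ < 0` at a left endpoint and `H x₀ > 0` at a right one, while at an endpoint `±1` the support
of `t` gives the same signs weakly. So the gap is all of `(-1, 1)`, whence `∫ t = 0 ≠ -P`.
-/

theorem continuousOn_of_sub_eq_intervalIntegral {u u' : ℝ → ℝ} {α β : ℝ}
    (hu' : IntegrableOn u' (Ioo α β))
    (hu : ∀ a ∈ Ioo α β, ∀ b ∈ Ioo α β, u b - u a = ∫ s in a..b, u' s) :
    ContinuousOn u (Ioo α β) := by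
  intro x hx
  have hprim : Continuous fun y => u x + ∫ s in x..y, (Ioo α β).indicator u' s :=
    continuous_const.add <| intervalIntegral.continuous_primitive
      (fun _ _ => (hu'.integrable_indicator measurableSet_Ioo).intervalIntegrable) x
  refine hprim.continuousOn.congr (fun y hy => ?_) x hx
  dsimp only
  rw [intervalIntegral.integral_congr fun s hs =>
    indicator_of_mem (ordConnected_Ioo.uIcc_subset hx hy hs) u', ← hu x hx y hy]
  ring

theorem exists_Ioo_subset_of_isOpen {S : Set ℝ} {α β x : ℝ} (hS : IsOpen S)
    (hSαβ : S ⊆ Ioo α β) (hx : x ∈ S) :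
    ∃ a b, a ∈ Icc α β \ S ∧ b ∈ Icc α β \ S ∧ x ∈ Ioo a b ∧ Ioo a b ⊆ S := by
  obtain ⟨hαx, hxβ⟩ := hSαβ hx
  set Z := Icc α β \ S
  have hZ : IsClosed Z := isClosed_Icc.sdiff hS
  have hα : α ∈ Z := ⟨left_mem_Icc.2 (hαx.trans hxβ).le, fun h => (hSαβ h).1.false⟩
  have hβ : β ∈ Z := ⟨right_mem_Icc.2 (hαx.trans hxβ).le, fun h => (hSαβ h).2.false⟩
  have hbdd_above : BddAbove (Z ∩ Iic x) := ⟨x, fun _ h => h.2⟩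
  have hbdd_below : BddBelow (Z ∩ Ici x) := ⟨x, fun _ h => h.2⟩
  have ha := (hZ.inter isClosed_Iic).csSup_mem ⟨α, hα, hαx.le⟩ hbdd_above
  have hb := (hZ.inter isClosed_Ici).csInf_mem ⟨β, hβ, hxβ.le⟩ hbdd_below
  refine ⟨_, _, ha.1, hb.1, ⟨ha.2.lt_of_ne ?_, hb.2.lt_of_ne' ?_⟩, fun y hy => ?_⟩
  · exact fun h => ha.1.2 (by rwa [h])
  · exact fun h => hb.1.2 (by rwa [h])
  by_contra hyS
  have hyZ : y ∈ Z := ⟨⟨ha.1.1.1.trans hy.1.le, hy.2.le.trans hb.1.1.2⟩, hyS⟩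
  rcases le_total y x with h | h
  · exact (le_csSup hbdd_above ⟨hyZ, h⟩).not_gt hy.1
  · exact (csInf_le hbdd_below ⟨hyZ, h⟩).not_gt hy.2

theorem min_sub_le_abs_sub {a b x s : ℝ} (hs : s ∉ Ioo a b) :
    min (x - a) (b - x) ≤ |x - s| := by
  rcases le_or_gt s a with h | h
  · exact (min_le_left _ _).trans ((by linarith : x - a ≤ x - s).trans (le_abs_self _))
  · have : b ≤ s := not_lt.1 fun h' => hs ⟨h, h'⟩
    exact (min_le_right _ _).trans ((by linarith : b - x ≤ -(x - s)).trans (neg_le_abs _))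

theorem integrable_div_sub_of_ae_eq_zero {t : ℝ → ℝ} {a b x : ℝ} (ht : Integrable t)
    (hx : x ∈ Ioo a b) (h0 : ∀ᵐ s, s ∈ Ioo a b → t s = 0) :
    Integrable fun s => t s / (x - s) := by
  have hδ : 0 < min (x - a) (b - x) := lt_min (sub_pos.2 hx.1) (sub_pos.2 hx.2)
  refine (ht.norm.div_const (min (x - a) (b - x))).mono'
    (ht.aemeasurable.div (measurable_const.sub measurable_id).aemeasurable).aestronglyMeasurable ?_
  filter_upwards [h0] with s hs
  by_cases hsab : s ∈ Ioo a b
  · simp [hs hsab]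
  · rw [norm_div, Real.norm_eq_abs (x - s)]
    exact div_le_div_of_nonneg_left (norm_nonneg _) hδ (min_sub_le_abs_sub hsab)

noncomputable def hilbertIntegral (t : ℝ → ℝ) (x : ℝ) : ℝ :=
  -(1 / π) * ∫ s, t s / (x - s)

theorem HT_eq_hilbertIntegral {t : ℝ → ℝ} {a b x : ℝ} (hx : x ∈ Ioo a b)
    (h0 : ∀ᵐ s, s ∈ Ioo a b → t s = 0) : HT t x = hilbertIntegral t x := by
  have hδ : 0 < min (x - a) (b - x) := lt_min (sub_pos.2 hx.1) (sub_pos.2 hx.2)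
  refine Tendsto.limUnder_eq (tendsto_const_nhds.congr' ?_)
  filter_upwards [Ioo_mem_nhdsGT hδ] with ε hε
  rw [hilbertIntegral, setIntegral_eq_integral_of_ae_compl_eq_zero]
  filter_upwards [h0] with s hs hsε
  have hsab : s ∈ Ioo a b := by
    by_contra h
    exact hsε (hε.2.trans_le (min_sub_le_abs_sub h))
  simp [hs hsab]

theorem antitoneOn_hilbertIntegral {t : ℝ → ℝ} {a b : ℝ} (ht : Integrable t)
    (ht_nonpos : ∀ᵐ s, t s ≤ 0) (h0 : ∀ᵐ s, s ∈ Ioo a b → t s = 0) :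
    AntitoneOn (hilbertIntegral t) (Ioo a b) := by
  intro x hx y hy hxy
  refine mul_le_mul_of_nonpos_left (integral_mono_ae (integrable_div_sub_of_ae_eq_zero ht hx h0)
    (integrable_div_sub_of_ae_eq_zero ht hy h0) ?_) (by simp [Real.pi_pos.le])
  filter_upwards [ht_nonpos, h0] with s hts hs
  by_cases hsab : s ∈ Ioo a b
  · simp [hs hsab]
  have hinv : (y - s)⁻¹ ≤ (x - s)⁻¹ := by
    rcases le_or_gt s a with h | h
    · exact inv_anti₀ (by linarith [hx.1]) (by linarith)
    · have : b ≤ s := not_lt.1 fun h' => hsab ⟨h, h'⟩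
      exact (inv_le_inv_of_neg (by linarith [hy.2]) (by linarith [hx.2])).2 (by linarith)
  simpa only [div_eq_mul_inv] using mul_le_mul_of_nonpos_left hinv hts

theorem hilbertIntegral_nonpos {t : ℝ → ℝ} {x : ℝ} (ht_nonpos : ∀ᵐ s, t s ≤ 0)
    (h0 : ∀ᵐ s, s ≤ x → t s = 0) : hilbertIntegral t x ≤ 0 := by
  refine mul_nonpos_of_nonpos_of_nonneg (by simp [Real.pi_pos.le]) (integral_nonneg_of_ae ?_)
  filter_upwards [ht_nonpos, h0] with s hts hs
  rcases le_or_gt s x with h | h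
  · simp [hs h]
  · exact div_nonneg_of_nonpos hts (sub_nonpos.2 h.le)

theorem hilbertIntegral_nonneg {t : ℝ → ℝ} {x : ℝ} (ht_nonpos : ∀ᵐ s, t s ≤ 0)
    (h0 : ∀ᵐ s, x ≤ s → t s = 0) : 0 ≤ hilbertIntegral t x := by
  refine mul_nonneg_of_nonpos_of_nonpos (by simp [Real.pi_pos.le]) (integral_nonpos_of_ae ?_)
  filter_upwards [ht_nonpos, h0] with s hts hs
  rcases le_or_gt x s with h | h
  · simp [hs h]
  · exact div_nonpos_of_nonpos_of_nonneg hts (sub_nonneg.2 h.le)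

theorem mul_sub_le_intervalIntegral {f : ℝ → ℝ} {c d M : ℝ} (hcd : c ≤ d)
    (hf : IntervalIntegrable f volume c d) (hM : ∀ᵐ s, s ∈ Ioo c d → M ≤ f s) :
    M * (d - c) ≤ ∫ s in c..d, f s := by
  rw [intervalIntegral.integral_of_le hcd, integral_Ioc_eq_integral_Ioo]
  have := setIntegral_mono_ae_restrict (integrableOn_const (C := M) (by simp))
    (hf.1.mono_set Ioo_subset_Ioc_self) ((ae_restrict_iff' measurableSet_Ioo).2 hM)
  rwa [setIntegral_const, Real.volume_real_Ioo_of_le hcd, smul_eq_mul, mul_comm] at this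

theorem intervalIntegral_le_mul_sub {f : ℝ → ℝ} {c d M : ℝ} (hcd : c ≤ d)
    (hf : IntervalIntegrable f volume c d) (hM : ∀ᵐ s, s ∈ Ioo c d → f s ≤ M) :
    ∫ s in c..d, f s ≤ M * (d - c) := by
  have := mul_sub_le_intervalIntegral hcd hf.neg (hM.mono fun s h hs => neg_le_neg (h hs))
  simp only [Pi.neg_apply, intervalIntegral.integral_neg] at this
  linarith

theorem AntitoneOn.neg_of_lt_left {g u u' : ℝ → ℝ} {a b x : ℝ} (hg : AntitoneOn g (Ioo a b))
    (hu' : ∀ᵐ s, s ∈ Ioo a b → u' s = g s) (hx : x ∈ Ioo a b)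
    (hint : IntervalIntegrable u' volume a x) (hu : u x - u a = ∫ s in a..x, u' s)
    (hlt : u x < u a) : g x < 0 := by
  have hbound := mul_sub_le_intervalIntegral hx.1.le hint (M := g x) <| by
    filter_upwards [hu'] with s hs hsx
    have hsab : s ∈ Ioo a b := ⟨hsx.1, hsx.2.trans hx.2⟩
    exact (hs hsab).symm ▸ hg hsab hx hsx.2.le
  exact neg_of_mul_neg_left (by linarith) (sub_pos.2 hx.1).le

theorem AntitoneOn.pos_of_lt_right {g u u' : ℝ → ℝ} {a b x : ℝ} (hg : AntitoneOn g (Ioo a b))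
    (hu' : ∀ᵐ s, s ∈ Ioo a b → u' s = g s) (hx : x ∈ Ioo a b)
    (hint : IntervalIntegrable u' volume x b) (hu : u b - u x = ∫ s in x..b, u' s)
    (hlt : u x < u b) : 0 < g x := by
  have hbound := intervalIntegral_le_mul_sub hx.2.le hint (M := g x) <| by
    filter_upwards [hu'] with s hs hsx
    have hsab : s ∈ Ioo a b := ⟨hx.1.trans hsx.1, hsx.2⟩
    exact (hs hsab).symm ▸ hg hx hsab hsx.1.le
  exact pos_of_mul_pos_left (by linarith) (sub_pos.2 hx.2).le

theorem ContinuousOn.nonpos_of_ae_nonpos {X : Type*} [TopologicalSpace X] [MeasurableSpace X]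
    [OpensMeasurableSpace X] {μ : Measure X} [μ.IsOpenPosMeasure] {u : X → ℝ} {U : Set X}
    (hU : IsOpen U) (hu : ContinuousOn u U) (h : ∀ᵐ x ∂μ, x ∈ U → u x ≤ 0) :
    ∀ x ∈ U, u x ≤ 0 := fun x hx => by
  have := Measure.eqOn_open_of_ae_eq (f := fun x => u x ⊓ 0)
    ((ae_restrict_iff' hU.measurableSet).2 (h.mono fun x h hx => inf_eq_left.2 (h hx)))
    hU (hu.inf continuousOn_const) hu hx
  exact this ▸ inf_le_right

theorem eq_Ioo_of_gap {t u u' : ℝ → ℝ} {α β a b x : ℝ} (ht : Integrable t)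
    (ht_nonpos : ∀ᵐ s, t s ≤ 0) (ht_zero : ∀ s, s ∉ Ioo α β → t s = 0)
    (hu'_int : IntegrableOn u' (Ioo α β))
    (hu : ∀ c ∈ Ioo α β, ∀ d ∈ Ioo α β, u d - u c = ∫ s in c..d, u' s)
    (hαa : α ≤ a) (hbβ : b ≤ β) (hx : x ∈ Ioo a b)
    (ht0 : ∀ᵐ s, s ∈ Ioo a b → t s = 0) (hu' : ∀ᵐ s, s ∈ Ioo a b → u' s = hilbertIntegral t s)
    (hua : α < a → u x < u a) (hub : b < β → u x < u b) : a = α ∧ b = β := by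
  have hint : ∀ c ∈ Ioo α β, ∀ d ∈ Ioo α β, IntervalIntegrable u' volume c d :=
    fun c hc d hd => (hu'_int.mono_set (ordConnected_Ioo.uIcc_subset hc hd)).intervalIntegrable
  have hxI : x ∈ Ioo α β := ⟨hαa.trans_lt hx.1, hx.2.trans_le hbβ⟩
  have hanti := antitoneOn_hilbertIntegral ht ht_nonpos ht0
  have hneg : α < a → hilbertIntegral t x < 0 := fun hαa' => by
    have haI : a ∈ Ioo α β := ⟨hαa', hx.1.trans hxI.2⟩
    exact hanti.neg_of_lt_left hu' hx (hint a haI x hxI) (hu a haI x hxI) (hua hαa')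
  have hpos : b < β → 0 < hilbertIntegral t x := fun hbβ' => by
    have hbI : b ∈ Ioo α β := ⟨hxI.1.trans hx.2, hbβ'⟩
    exact hanti.pos_of_lt_right hu' hx (hint x hxI b hbI) (hu x hxI b hbI) (hub hbβ')
  have hnonpos : hilbertIntegral t x ≤ 0 := by
    rcases hαa.eq_or_lt with rfl | hαa'
    · refine hilbertIntegral_nonpos ht_nonpos ?_
      filter_upwards [ht0] with s hs0 hs
      by_cases hsI : s ∈ Ioo α β
      · exact hs0 ⟨hsI.1, hs.trans_lt hx.2⟩
      · exact ht_zero s hsI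
    · exact (hneg hαa').le
  have hnonneg : 0 ≤ hilbertIntegral t x := by
    rcases hbβ.eq_or_lt with rfl | hbβ'
    · refine hilbertIntegral_nonneg ht_nonpos ?_
      filter_upwards [ht0] with s hs0 hs
      by_cases hsI : s ∈ Ioo α b
      · exact hs0 ⟨hx.1.trans_le hs, hsI.2⟩
      · exact ht_zero s hsI
    · exact (hpos hbβ').le
  exact ⟨(hαa.eq_or_lt.resolve_right fun h => (hneg h).not_ge hnonneg).symm,
    hbβ.eq_or_lt.resolve_right fun h => (hpos h).not_ge hnonpos⟩

theorem stmt0_general (P : ℝ) (hP : 0 < P) (f : ℝ → ℝ)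
    (p : ℝ) (hp : 1 < p)
    (t u u' : ℝ → ℝ)
    (ht_zero : ∀ x, x ∉ Set.Ioo (-1:ℝ) 1 → t x = 0)
    (ht_Lp : MemLp t (ENNReal.ofReal p) (volume : Measure ℝ))
    (hu'_Lp : MemLp u' (ENNReal.ofReal p) (volume.restrict (Set.Ioo (-1:ℝ) 1)))
    (huAC : ∀ a ∈ Set.Ioo (-1:ℝ) 1, ∀ b ∈ Set.Ioo (-1:ℝ) 1,
      u b - u a = ∫ s in a..b, u' s)
    (hCarleman : ∀ᵐ x ∂(volume : Measure ℝ), x ∈ Set.Ioo (-1:ℝ) 1 →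
      HT t x + f x * t x = u' x)
    (hsign : ∀ᵐ x ∂(volume : Measure ℝ), x ∈ Set.Ioo (-1:ℝ) 1 →
      u x ≤ 0 ∧ t x ≤ 0 ∧ u x * t x = 0)
    (hmass : (∫ x in Set.Ioo (-1:ℝ) 1, t x) = -P) :
    ∀ x ∈ Set.Ioo (-1:ℝ) 1, u x = 0 := by
  have hp1 : (1 : ℝ≥0∞) ≤ ENNReal.ofReal p := ENNReal.one_le_ofReal.2 hp.le
  have ht_int : Integrable t := IntegrableOn.integrable_of_forall_notMem_eq_zero
    ((ht_Lp.restrict (Ioo (-1) 1)).integrable hp1) ht_zero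
  have hu'_int : IntegrableOn u' (Ioo (-1) 1) := hu'_Lp.integrable hp1
  have hu_cont : ContinuousOn u (Ioo (-1) 1) :=
    continuousOn_of_sub_eq_intervalIntegral hu'_int huAC
  have hu_nonpos := hu_cont.nonpos_of_ae_nonpos isOpen_Ioo (hsign.mono fun x h hx => (h hx).1)
  have ht_nonpos : ∀ᵐ s, t s ≤ 0 := hsign.mono fun s hs =>
    if h : s ∈ Ioo (-1:ℝ) 1 then (hs h).2.1 else (ht_zero s h).le
  intro x₀ hx₀
  by_contra hne
  have hux₀ : u x₀ < 0 := (hu_nonpos x₀ hx₀).lt_of_ne hne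
  obtain ⟨a, b, ha, hb, hx₀ab, hab⟩ := exists_Ioo_subset_of_isOpen
    (hu_cont.isOpen_inter_preimage isOpen_Ioo isOpen_Iio) inter_subset_left ⟨hx₀, hux₀⟩
  have ht0 : ∀ᵐ s, s ∈ Ioo a b → t s = 0 := by
    filter_upwards [hsign] with s hs hsab
    exact (mul_eq_zero.1 (hs (hab hsab).1).2.2).resolve_left (hab hsab).2.ne
  have hu' : ∀ᵐ s, s ∈ Ioo a b → u' s = hilbertIntegral t s := by
    filter_upwards [hCarleman, ht0] with s hC hs0 hs
    rw [← hC (hab hs).1, HT_eq_hilbertIntegral hs ht0, hs0 hs, mul_zero, add_zero]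
  have hend : ∀ c ∈ Icc (-1:ℝ) 1 \ (Ioo (-1) 1 ∩ u ⁻¹' Iio 0), c ∈ Ioo (-1:ℝ) 1 → u x₀ < u c :=
    fun c hc hcI => hux₀.trans_le (not_lt.1 fun h => hc.2 ⟨hcI, h⟩)
  obtain ⟨rfl, rfl⟩ := eq_Ioo_of_gap ht_int ht_nonpos ht_zero hu'_int huAC ha.1.1 hb.1.2 hx₀ab
    ht0 hu' (fun h => hend a ha ⟨h, hx₀ab.1.trans hx₀.2⟩)
    (fun h => hend b hb ⟨hx₀.1.trans hx₀ab.2, h⟩)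
  have : ∫ x in Ioo (-1:ℝ) 1, t x = 0 := setIntegral_eq_zero_of_ae_eq_zero ht0
  linarith

/-- For the moving flat punch with piecewise Lipschitz friction
coefficient, any solution of the contact problem has `u ≡ 0` on `(-1,1)`
(active contact everywhere). -/
theorem stmt0 (P : ℝ) (hP : 0 < P) (f : ℝ → ℝ)
    (hf_pl : PiecewiseLipschitzOn f)
    (hf_zero : ∀ x, x ∉ Set.Ioo (-1:ℝ) 1 → f x = 0)
    (p : ℝ) (hp : 1 < p)
    (t u u' : ℝ → ℝ)
    (ht_zero : ∀ x, x ∉ Set.Ioo (-1:ℝ) 1 → t x = 0)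
    (ht_Lp : MemLp t (ENNReal.ofReal p) (volume : Measure ℝ))
    (hu'_Lp : MemLp u' (ENNReal.ofReal p) (volume.restrict (Set.Ioo (-1:ℝ) 1)))
    (huAC : ∀ a ∈ Set.Ioo (-1:ℝ) 1, ∀ b ∈ Set.Ioo (-1:ℝ) 1,
      u b - u a = ∫ s in a..b, u' s)
    (hCarleman : ∀ᵐ x ∂(volume : Measure ℝ), x ∈ Set.Ioo (-1:ℝ) 1 →
      HT t x + f x * t x = u' x)
    (hsign : ∀ᵐ x ∂(volume : Measure ℝ), x ∈ Set.Ioo (-1:ℝ) 1 →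
      u x ≤ 0 ∧ t x ≤ 0 ∧ u x * t x = 0)
    (hmass : (∫ x in Set.Ioo (-1:ℝ) 1, t x) = -P) :
    ∀ x ∈ Set.Ioo (-1:ℝ) 1, u x = 0 :=
  stmt0_general P hP f p hp t u u' ht_zero ht_Lp hu'_Lp huAC hCarleman hsign hmass
end

section
/- Let μ⁺ and μ⁻ be finite atomless Borel measures on ℝ, both supported in [−1,1], with μ⁺(ℝ) = μ⁻(ℝ). For a bounded Borel function h write ∫ h dt := ∫ h dμ⁺ − ∫ h dμ⁻, and set T(x) := μ⁺([−1,x]) − μ⁻([−1,x]) (so T is continuous, T(−1) = 0 and T(1) = 0). Let f₁, f₂ : ℝ → ℝ be nondecreasing right-continuous functions with associated Lebesgue–Stieltjes measures ν₁, ν₂, and set f := f₁ − f₂ (a function of bounded variation on [−1,1] with derivative measure ν₁ − ν₂). Then: ∫_{[−1,1]} ( ∫_{[−1,x]} f dt ) dt(x) = (1/2)·( ∫_{[−1,1]} T(x)² dν₁(x) − ∫_{[−1,1]} T(x)² dν₂(x) ), where ∫_{[−1,x]} f dt := ∫ f·χ_{[−1,x]} dμ⁺ − ∫ f·χ_{[−1,x]}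 dμ⁻ and the outer integral of the bounded continuous function x ↦ ∫_{[−1,x]} f dt is likewise taken against μ⁺ minus against μ⁻. -/
/-!
Write `t = μp - μm` and `T x = t(-∞, x]`. Fubini over the triangle `{y ≤ x}` turns `∫ F dt` into
`∫ f(y) t[y, ∞) dt(y)`, and `t[y, ∞) = -T y` because `t` has no atoms and total mass zero.
For a Stieltjes function `g`, writing `g y = g(-1) + ν_g(-1, y]` on `[-1, 1]` and using Fubini once
more gives `∫ g T dt = ∫ (∫_{[z, ∞)} T dt) dν_g(z)`, since `∫ T dt = 0`. The inner integral equals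
`-T(z)² / 2`: splitting the square into `{y ≤ x}` and `{x < y}` shows
`∫ ν(-∞, x] dμ(x) + ∫ μ(-∞, y] dν(y) = μ(ℝ) ν(ℝ)` for atomless finite `μ`, `ν`, which applied to
the restrictions of `μp`, `μm` to `(-∞, z]` gives `∫_{(-∞, z]} T dt = T(z)² / 2`.
-/

open MeasureTheory Set
open scoped ENNReal

lemma norm_measureReal_le_measureReal_univ {α : Type*} [MeasurableSpace α] (μ : Measure α)
    [IsFiniteMeasure μ] (s : Set α) : ‖μ.real s‖ ≤ μ.real univ := by
  rw [Real.norm_of_nonneg measureReal_nonneg]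
  exact measureReal_mono (subset_univ _)

section ProdSections

variable {α β : Type*} [MeasurableSpace α] [MeasurableSpace β] {μ : Measure α} {ν : Measure β}
  {s : Set (α × β)} {g : β → ℝ}

lemma integral_indicator_comp_snd_prodMk (hs : MeasurableSet s) (x : α) :
    ∫ y, s.indicator (fun p => g p.2) (x, y) ∂ν = ∫ y in Prod.mk x ⁻¹' s, g y ∂ν := by
  simp_rw [← indicator_comp_right (Prod.mk x)]
  exact integral_indicator (measurable_prodMk_left hs)

variable [IsFiniteMeasure μ] [SFinite ν]

lemma integrable_indicator_comp_snd (hs : MeasurableSet s) (hg : Integrable g ν) :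
    Integrable (s.indicator fun p => g p.2) (μ.prod ν) :=
  (hg.comp_snd μ).indicator hs

lemma integrable_setIntegral_prodMk_preimage (hs : MeasurableSet s) (hg : Integrable g ν) :
    Integrable (fun x => ∫ y in Prod.mk x ⁻¹' s, g y ∂ν) μ := by
  simpa only [integral_indicator_comp_snd_prodMk hs] using
    (integrable_indicator_comp_snd (μ := μ) hs hg).integral_prod_left

lemma integral_setIntegral_prodMk_preimage (hs : MeasurableSet s) (hg : Integrable g ν) :
    ∫ x, (∫ y in Prod.mk x ⁻¹' s, g y ∂ν) ∂μ = ∫ y, g y * μ.real ((·, y) ⁻¹' s) ∂ν := by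
  have hswap := integral_integral_swap (f := fun x y => s.indicator (fun p => g p.2) (x, y))
    (integrable_indicator_comp_snd (μ := μ) hs hg)
  simp only [integral_indicator_comp_snd_prodMk hs] at hswap
  rw [hswap]
  congr 1 with y
  rw [mul_comm, ← smul_eq_mul, ← integral_indicator_const _ (measurable_prodMk_right hs)]
  rfl

end ProdSections

section Triangles

variable {μ ρ : Measure ℝ} [IsFiniteMeasure μ] [IsFiniteMeasure ρ] {f : ℝ → ℝ}

lemma integrable_setIntegral_Iic (hf : Integrable f ρ) :
    Integrable (fun x => ∫ y in Iic x, f y ∂ρ) μ :=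
  integrable_setIntegral_prodMk_preimage (s := {p : ℝ × ℝ | p.2 ≤ p.1})
    (measurableSet_le measurable_snd measurable_fst) hf

lemma integral_setIntegral_Iic (hf : Integrable f ρ) :
    ∫ x, (∫ y in Iic x, f y ∂ρ) ∂μ = ∫ y, f y * μ.real (Ici y) ∂ρ :=
  integral_setIntegral_prodMk_preimage (s := {p : ℝ × ℝ | p.2 ≤ p.1})
    (measurableSet_le measurable_snd measurable_fst) hf

lemma integrable_setIntegral_Ici (hf : Integrable f ρ) :
    Integrable (fun x => ∫ y in Ici x, f y ∂ρ) μ :=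
  integrable_setIntegral_prodMk_preimage (s := {p : ℝ × ℝ | p.1 ≤ p.2})
    (measurableSet_le measurable_fst measurable_snd) hf

lemma integral_setIntegral_Ici (hf : Integrable f ρ) :
    ∫ x, (∫ y in Ici x, f y ∂ρ) ∂μ = ∫ y, f y * μ.real (Iic y) ∂ρ :=
  integral_setIntegral_prodMk_preimage (s := {p : ℝ × ℝ | p.1 ≤ p.2})
    (measurableSet_le measurable_fst measurable_snd) hf

end Triangles

lemma lintegral_measure_Iic_add_lintegral_measure_Iio (μ ν : Measure ℝ) [SFinite μ] [SFinite ν] :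
    ∫⁻ x, ν (Iic x) ∂μ + ∫⁻ y, μ (Iio y) ∂ν = μ univ * ν univ := by
  have hle : MeasurableSet {p : ℝ × ℝ | p.2 ≤ p.1} := measurableSet_le measurable_snd measurable_fst
  have hcompl : {p : ℝ × ℝ | p.2 ≤ p.1}ᶜ = {p | p.1 < p.2} := by ext; simp
  have hIic : (μ.prod ν) {p | p.2 ≤ p.1} = ∫⁻ x, ν (Iic x) ∂μ := Measure.prod_apply hle
  have hIio : (μ.prod ν) {p | p.1 < p.2} = ∫⁻ y, μ (Iio y) ∂ν :=
    Measure.prod_apply_symm (measurableSet_lt measurable_fst measurable_snd)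
  rw [← hIic, ← hIio, ← hcompl, measure_add_measure_compl hle, ← univ_prod_univ,
    Measure.prod_prod]

lemma measurable_measureReal_Iic (μ : Measure ℝ) [IsFiniteMeasure μ] :
    Measurable fun x => μ.real (Iic x) :=
  Monotone.measurable fun _ _ h => measureReal_mono (Iic_subset_Iic.2 h)

lemma integrable_measureReal_Iic (μ ρ : Measure ℝ) [IsFiniteMeasure μ] [IsFiniteMeasure ρ] :
    Integrable (fun x => μ.real (Iic x)) ρ :=
  .of_bound (measurable_measureReal_Iic μ).aestronglyMeasurable (μ.real univ)
    (ae_of_all _ fun _ => norm_measureReal_le_measureReal_univ μ _)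

lemma integral_measureReal_Iic_add_integral_measureReal_Iic {μ ν : Measure ℝ} [IsFiniteMeasure μ]
    [IsFiniteMeasure ν] [NullSingletonClass μ] :
    ∫ x, ν.real (Iic x) ∂μ + ∫ y, μ.real (Iic y) ∂ν = μ.real univ * ν.real univ := by
  have hfin : ∫⁻ x, ν (Iic x) ∂μ + ∫⁻ y, μ (Iio y) ∂ν ≠ ∞ := by
    rw [lintegral_measure_Iic_add_lintegral_measure_Iio]
    exact ENNReal.mul_ne_top (measure_ne_top _ _) (measure_ne_top _ _)
  simp only [← measureReal_congr (μ := μ) Iio_ae_eq_Iic, measureReal_def]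
  rw [integral_toReal, integral_toReal, ← ENNReal.toReal_add (ENNReal.add_ne_top.1 hfin).1
    (ENNReal.add_ne_top.1 hfin).2, lintegral_measure_Iic_add_lintegral_measure_Iio,
    ENNReal.toReal_mul]
  · exact (Monotone.measurable fun _ _ h => measure_mono (Iio_subset_Iio h)).aemeasurable
  · exact ae_of_all _ fun _ => measure_lt_top _ _
  · exact (Monotone.measurable fun _ _ h => measure_mono (Iic_subset_Iic.2 h)).aemeasurable
  · exact ae_of_all _ fun _ => measure_lt_top _ _

-- The function `T` of the statement, once the support condition lets `[-1, x]` become `(-∞, x]`.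
def signedCdf (μ ν : Measure ℝ) (x : ℝ) : ℝ := μ.real (Iic x) - ν.real (Iic x)

lemma signedCdf_eq_zero_of_ae_le {μ ν : Measure ℝ} [NullSingletonClass μ] [NullSingletonClass ν]
    {a : ℝ} (hμ : ∀ᵐ x ∂μ, a ≤ x) (hν : ∀ᵐ x ∂ν, a ≤ x) : signedCdf μ ν a = 0 := by
  have hnull : ∀ (κ : Measure ℝ) [NullSingletonClass κ], (∀ᵐ x ∂κ, a ≤ x) → κ.real (Iic a) = 0 :=
    fun κ _ hκ => by
      rw [← measureReal_congr Iio_ae_eq_Iic, measureReal_def,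
        measure_mono_null (s := Iio a) (t := {x | ¬a ≤ x}) (fun _ hx => not_le.2 hx) (ae_iff.1 hκ),
        ENNReal.toReal_zero]
  rw [signedCdf, hnull μ hμ, hnull ν hν, sub_zero]

section SignedCdf

variable {μ ν ρ : Measure ℝ} [IsFiniteMeasure μ] [IsFiniteMeasure ν]

lemma measurable_signedCdf : Measurable (signedCdf μ ν) :=
  (measurable_measureReal_Iic μ).sub (measurable_measureReal_Iic ν)

lemma abs_signedCdf_le (x : ℝ) : |signedCdf μ ν x| ≤ μ.real univ + ν.real univ := by
  have hμ : μ.real (Iic x) ≤ μ.real univ := measureReal_mono (subset_univ _)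
  have hν : ν.real (Iic x) ≤ ν.real univ := measureReal_mono (subset_univ _)
  rw [signedCdf, abs_le]
  constructor <;> linarith [measureReal_nonneg (μ := μ) (s := Iic x),
    measureReal_nonneg (μ := ν) (s := Iic x)]

lemma integrable_signedCdf [IsFiniteMeasure ρ] : Integrable (signedCdf μ ν) ρ :=
  (integrable_measureReal_Iic μ ρ).sub (integrable_measureReal_Iic ν ρ)

lemma MeasureTheory.Integrable.mul_signedCdf {f : ℝ → ℝ} (hf : Integrable f ρ) :
    Integrable (fun x => f x * signedCdf μ ν x) ρ :=
  hf.mul_bdd measurable_signedCdf.aestronglyMeasurable (ae_of_all _ abs_signedCdf_le)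

variable [NullSingletonClass μ] [NullSingletonClass ν]

lemma integral_signedCdf_sub_integral_signedCdf :
    ∫ x, signedCdf μ ν x ∂μ - ∫ x, signedCdf μ ν x ∂ν = (μ.real univ - ν.real univ) ^ 2 / 2 := by
  have hμμ := integral_measureReal_Iic_add_integral_measureReal_Iic (μ := μ) (ν := μ)
  have hνν := integral_measureReal_Iic_add_integral_measureReal_Iic (μ := ν) (ν := ν)
  have hμν := integral_measureReal_Iic_add_integral_measureReal_Iic (μ := μ) (ν := ν)
  simp only [signedCdf]
  rw [integral_sub (integrable_measureReal_Iic μ μ) (integrable_measureReal_Iic ν μ),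
    integral_sub (integrable_measureReal_Iic μ ν) (integrable_measureReal_Iic ν ν)]
  linear_combination (hμμ + hνν) / 2 - hμν

lemma integral_signedCdf_sub_integral_signedCdf_eq_zero (hμν : μ univ = ν univ) :
    ∫ x, signedCdf μ ν x ∂μ - ∫ x, signedCdf μ ν x ∂ν = 0 := by
  rw [integral_signedCdf_sub_integral_signedCdf, measureReal_def, measureReal_def, hμν, sub_self]
  norm_num

lemma setIntegral_Iic_signedCdf_sub_setIntegral_Iic_signedCdf (z : ℝ) :
    ∫ x in Iic z, signedCdf μ ν x ∂μ - ∫ x in Iic z, signedCdf μ ν x ∂ν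
      = signedCdf μ ν z ^ 2 / 2 := by
  have hres : EqOn (signedCdf μ ν) (signedCdf (μ.restrict (Iic z)) (ν.restrict (Iic z))) (Iic z) :=
    fun x hx => by
      simp only [signedCdf, measureReal_restrict_apply measurableSet_Iic,
        Iic_inter_Iic, inf_eq_left.2 (mem_Iic.1 hx)]
  rw [setIntegral_congr_fun measurableSet_Iic hres, setIntegral_congr_fun measurableSet_Iic hres,
    integral_signedCdf_sub_integral_signedCdf, measureReal_restrict_apply_univ,
    measureReal_restrict_apply_univ, signedCdf]

lemma setIntegral_Ici_signedCdf_sub_setIntegral_Ici_signedCdf (hμν : μ univ = ν univ) (z : ℝ) :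
    ∫ x in Ici z, signedCdf μ ν x ∂μ - ∫ x in Ici z, signedCdf μ ν x ∂ν
      = -(signedCdf μ ν z ^ 2 / 2) := by
  have hμ := integral_add_compl (measurableSet_Iic (a := z))
    (integrable_signedCdf (μ := μ) (ν := ν) (ρ := μ))
  have hν := integral_add_compl (measurableSet_Iic (a := z))
    (integrable_signedCdf (μ := μ) (ν := ν) (ρ := ν))
  rw [integral_Ici_eq_integral_Ioi (μ := μ), integral_Ici_eq_integral_Ioi (μ := ν), ← compl_Iic]
  linear_combination hμ - hν + integral_signedCdf_sub_integral_signedCdf_eq_zero hμν -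
    setIntegral_Iic_signedCdf_sub_setIntegral_Iic_signedCdf (μ := μ) (ν := ν) z

lemma measureReal_Ici_sub_measureReal_Ici (hμν : μ univ = ν univ) (x : ℝ) :
    μ.real (Ici x) - ν.real (Ici x) = -signedCdf μ ν x := by
  rw [← compl_Iio, measureReal_compl measurableSet_Iio, measureReal_compl measurableSet_Iio,
    measureReal_congr (μ := μ) Iio_ae_eq_Iic, measureReal_congr (μ := ν) Iio_ae_eq_Iic,
    measureReal_def μ univ, measureReal_def ν univ, hμν, signedCdf]
  ring

variable [IsFiniteMeasure ρ] {f : ℝ → ℝ}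

lemma integral_setIntegral_Iic_sub_integral_setIntegral_Iic (hμν : μ univ = ν univ)
    (hf : Integrable f ρ) :
    ∫ x, (∫ y in Iic x, f y ∂ρ) ∂μ - ∫ x, (∫ y in Iic x, f y ∂ρ) ∂ν
      = -∫ y, f y * signedCdf μ ν y ∂ρ := by
  have hIci : ∀ (κ : Measure ℝ) [IsFiniteMeasure κ], Integrable (fun y => f y * κ.real (Ici y)) ρ :=
    fun κ _ => hf.mul_bdd
      (Antitone.measurable fun _ _ h => measureReal_mono (Ici_subset_Ici.2 h)).aestronglyMeasurable
      (ae_of_all _ fun _ => norm_measureReal_le_measureReal_univ κ _)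
  rw [integral_setIntegral_Iic hf, integral_setIntegral_Iic hf, ← integral_sub (hIci μ) (hIci ν),
    ← integral_neg]
  congr 1 with y
  rw [← mul_sub, measureReal_Ici_sub_measureReal_Ici hμν, mul_neg]

theorem integral_setIntegral_Iic_sub_eq_integral_mul_signedCdf_sub (hμν : μ univ = ν univ)
    (hfμ : Integrable f μ) (hfν : Integrable f ν) :
    (∫ x, (∫ y in Iic x, f y ∂μ - ∫ y in Iic x, f y ∂ν) ∂μ)
        - ∫ x, (∫ y in Iic x, f y ∂μ - ∫ y in Iic x, f y ∂ν) ∂ν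
      = ∫ y, f y * signedCdf μ ν y ∂ν - ∫ y, f y * signedCdf μ ν y ∂μ := by
  rw [integral_sub (integrable_setIntegral_Iic hfμ) (integrable_setIntegral_Iic hfν),
    integral_sub (integrable_setIntegral_Iic hfμ) (integrable_setIntegral_Iic hfν)]
  linear_combination integral_setIntegral_Iic_sub_integral_setIntegral_Iic hμν hfμ -
    integral_setIntegral_Iic_sub_integral_setIntegral_Iic hμν hfν

end SignedCdf

lemma StieltjesFunction.measureReal_restrict_Ioc_Iic (g : StieltjesFunction ℝ) {a b x : ℝ}
    (hax : a ≤ x) (hxb : x ≤ b) : (g.measure.restrict (Ioc a b)).real (Iic x) = g x - g a := by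
  rw [measureReal_restrict_apply measurableSet_Iic, Iic_inter_Ioc_of_le hxb, measureReal_def,
    g.measure_Ioc, ENNReal.toReal_ofReal (sub_nonneg.2 (g.mono hax))]

lemma StieltjesFunction.integrable_of_ae_mem_Icc (g : StieltjesFunction ℝ) {ρ : Measure ℝ}
    [IsFiniteMeasure ρ] {a b : ℝ} (hρ : ∀ᵐ x ∂ρ, x ∈ Icc a b) : Integrable g ρ := by
  rw [← Measure.restrict_eq_self_of_ae_mem hρ]
  exact (g.mono.monotoneOn _).integrableOn_isCompact isCompact_Icc

section Stieltjes

variable {μ ν : Measure ℝ} [IsFiniteMeasure μ] [IsFiniteMeasure ν]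
  [NullSingletonClass μ] [NullSingletonClass ν] {a b : ℝ}

theorem StieltjesFunction.integral_mul_signedCdf_sub (g : StieltjesFunction ℝ)
    (hμ : ∀ᵐ x ∂μ, x ∈ Icc a b) (hν : ∀ᵐ x ∂ν, x ∈ Icc a b) (hμν : μ univ = ν univ) :
    ∫ x, g x * signedCdf μ ν x ∂μ - ∫ x, g x * signedCdf μ ν x ∂ν
      = -(1 / 2) * ∫ x in Icc a b, signedCdf μ ν x ^ 2 ∂g.measure := by
  set ν' := g.measure.restrict (Ioc a b)
  have : IsFiniteMeasure ν' := isFiniteMeasure_restrict.2 (by simp [g.measure_Ioc])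
  have hsplit : ∀ (ρ : Measure ℝ) [IsFiniteMeasure ρ], (∀ᵐ x ∂ρ, x ∈ Icc a b) →
      ∫ x, g x * signedCdf μ ν x ∂ρ
        = g a * ∫ x, signedCdf μ ν x ∂ρ + ∫ z, (∫ x in Ici z, signedCdf μ ν x ∂ρ) ∂ν' := by
    intro ρ _ hρ
    have hrepr : ∀ᵐ x ∂ρ, g x * signedCdf μ ν x
        = g a * signedCdf μ ν x + signedCdf μ ν x * ν'.real (Iic x) :=
      hρ.mono fun x hx => by rw [g.measureReal_restrict_Ioc_Iic hx.1 hx.2]; ring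
    have hint : Integrable (fun x => signedCdf μ ν x * ν'.real (Iic x)) ρ :=
      integrable_signedCdf.mul_bdd (measurable_measureReal_Iic ν').aestronglyMeasurable
        (ae_of_all _ fun _ => norm_measureReal_le_measureReal_univ ν' _)
    rw [integral_congr_ae hrepr, integral_add (integrable_signedCdf.const_mul _) hint,
      integral_const_mul, integral_setIntegral_Ici integrable_signedCdf]
  have hinner : ∫ z, (∫ x in Ici z, signedCdf μ ν x ∂μ) ∂ν'
        - ∫ z, (∫ x in Ici z, signedCdf μ ν x ∂ν) ∂ν'
      = -(1 / 2) * ∫ z, signedCdf μ ν z ^ 2 ∂ν' := by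
    rw [← integral_sub (integrable_setIntegral_Ici integrable_signedCdf)
      (integrable_setIntegral_Ici integrable_signedCdf), ← integral_const_mul]
    congr 1 with z
    rw [setIntegral_Ici_signedCdf_sub_setIntegral_Ici_signedCdf hμν]
    ring
  -- `ν'` misses the possible atom of `g.measure` at `a`, where `signedCdf μ ν` vanishes.
  have hIcc : ∫ x in Icc a b, signedCdf μ ν x ^ 2 ∂g.measure = ∫ z, signedCdf μ ν z ^ 2 ∂ν' := by
    refine setIntegral_eq_of_subset_of_forall_sdiff_eq_zero measurableSet_Icc Ioc_subset_Icc_self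
      fun x hx => ?_
    obtain ⟨⟨hax, hxb⟩, hx⟩ := hx
    obtain rfl : x = a := le_antisymm (not_lt.1 fun h => hx ⟨h, hxb⟩) hax
    rw [signedCdf_eq_zero_of_ae_le (hμ.mono fun _ hx => hx.1) (hν.mono fun _ hx => hx.1)]
    simp
  rw [hsplit μ hμ, hsplit ν hν, hIcc]
  linear_combination g a * integral_signedCdf_sub_integral_signedCdf_eq_zero hμν + hinner

theorem StieltjesFunction.integral_sub_mul_signedCdf_sub (g₁ g₂ : StieltjesFunction ℝ)
    (hμ : ∀ᵐ x ∂μ, x ∈ Icc a b) (hν : ∀ᵐ x ∂ν, x ∈ Icc a b) (hμν : μ univ = ν univ) :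
    ∫ x, (g₁ x - g₂ x) * signedCdf μ ν x ∂μ - ∫ x, (g₁ x - g₂ x) * signedCdf μ ν x ∂ν
      = -(1 / 2) * (∫ x in Icc a b, signedCdf μ ν x ^ 2 ∂g₁.measure
        - ∫ x in Icc a b, signedCdf μ ν x ^ 2 ∂g₂.measure) := by
  have hint : ∀ (g : StieltjesFunction ℝ) (ρ : Measure ℝ) [IsFiniteMeasure ρ],
      (∀ᵐ x ∂ρ, x ∈ Icc a b) → Integrable (fun x => g x * signedCdf μ ν x) ρ :=
    fun g _ _ hρ => (g.integrable_of_ae_mem_Icc hρ).mul_signedCdf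
  simp_rw [sub_mul]
  rw [integral_sub (hint g₁ μ hμ) (hint g₂ μ hμ), integral_sub (hint g₁ ν hν) (hint g₂ ν hν)]
  linear_combination g₁.integral_mul_signedCdf_sub hμ hν hμν -
    g₂.integral_mul_signedCdf_sub hμ hν hμν

end Stieltjes

lemma restrict_Icc_eq_restrict_Iic_of_ae_le {μ : Measure ℝ} {a : ℝ} (hμ : ∀ᵐ x ∂μ, a ≤ x)
    (x : ℝ) : μ.restrict (Icc a x) = μ.restrict (Iic x) := by
  rw [← Iic_inter_Ici, ← Measure.restrict_restrict measurableSet_Iic,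
    Measure.restrict_eq_self_of_ae_mem (s := Ici a) hμ]

lemma measure_Icc_eq_measure_Iic_of_ae_le {μ : Measure ℝ} {a : ℝ} (hμ : ∀ᵐ x ∂μ, a ≤ x)
    (x : ℝ) : μ (Icc a x) = μ (Iic x) := by
  rw [← Measure.restrict_apply_univ, restrict_Icc_eq_restrict_Iic_of_ae_le hμ,
    Measure.restrict_apply_univ]

/-- The key integration-by-parts identity: for a signed measure
`t = μ⁺ - μ⁻` (finite, atomless, supported in `[-1,1]`, with zero total mass) and
a `BV` function `f = f₁ - f₂` (difference of nondecreasing right-continuous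
functions, with derivative measure `ν₁ - ν₂`),
`∫ (∫_{[-1,x]} f dt) dt(x) = (1/2)(∫ T² dν₁ - ∫ T² dν₂)` where
`T(x) = μ⁺([-1,x]) - μ⁻([-1,x])`. -/
theorem stmt10 (μp μm : Measure ℝ) [IsFiniteMeasure μp] [IsFiniteMeasure μm]
    (hp_atomless : ∀ x : ℝ, μp {x} = 0) (hm_atomless : ∀ x : ℝ, μm {x} = 0)
    (hp_supp : μp (Set.Icc (-1:ℝ) 1)ᶜ = 0) (hm_supp : μm (Set.Icc (-1:ℝ) 1)ᶜ = 0)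
    (hmass : μp Set.univ = μm Set.univ)
    (T : ℝ → ℝ)
    (hT : ∀ x, T x = (μp (Set.Icc (-1:ℝ) x)).toReal - (μm (Set.Icc (-1:ℝ) x)).toReal)
    (f₁ f₂ : StieltjesFunction ℝ) (f : ℝ → ℝ)
    (hf : ∀ x, f x = f₁ x - f₂ x)
    (F : ℝ → ℝ)
    (hF : ∀ x, F x = (∫ y in Set.Icc (-1:ℝ) x, f y ∂μp)
      - ∫ y in Set.Icc (-1:ℝ) x, f y ∂μm) :
    (∫ x in Set.Icc (-1:ℝ) 1, F x ∂μp) - (∫ x in Set.Icc (-1:ℝ) 1, F x ∂μm)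
      = (1/2) * ((∫ x in Set.Icc (-1:ℝ) 1, (T x) ^ 2 ∂f₁.measure)
        - ∫ x in Set.Icc (-1:ℝ) 1, (T x) ^ 2 ∂f₂.measure) := by
  have : NullSingletonClass μp := ⟨hp_atomless⟩
  have : NullSingletonClass μm := ⟨hm_atomless⟩
  have hp : ∀ᵐ x ∂μp, x ∈ Icc (-1:ℝ) 1 := mem_ae_iff.2 hp_supp
  have hm : ∀ᵐ x ∂μm, x ∈ Icc (-1:ℝ) 1 := mem_ae_iff.2 hm_supp
  have hp₁ : ∀ᵐ x ∂μp, -1 ≤ x := hp.mono fun _ hx => hx.1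
  have hm₁ : ∀ᵐ x ∂μm, -1 ≤ x := hm.mono fun _ hx => hx.1
  obtain rfl : T = signedCdf μp μm := funext fun x => by
    rw [hT, measure_Icc_eq_measure_Iic_of_ae_le hp₁, measure_Icc_eq_measure_Iic_of_ae_le hm₁]; rfl
  obtain rfl : F = fun x => ∫ y in Iic x, f y ∂μp - ∫ y in Iic x, f y ∂μm := funext fun x => by
    rw [hF, restrict_Icc_eq_restrict_Iic_of_ae_le hp₁, restrict_Icc_eq_restrict_Iic_of_ae_le hm₁]
  obtain rfl : f = fun x => f₁ x - f₂ x := funext hf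
  beta_reduce
  rw [Measure.restrict_eq_self_of_ae_mem hp, Measure.restrict_eq_self_of_ae_mem hm,
    integral_setIntegral_Iic_sub_eq_integral_mul_signedCdf_sub (f := fun x => f₁ x - f₂ x) hmass
      ((f₁.integrable_of_ae_mem_Icc hp).sub (f₂.integrable_of_ae_mem_Icc hp))
      ((f₁.integrable_of_ae_mem_Icc hm).sub (f₂.integrable_of_ae_mem_Icc hm))]
  linear_combination -StieltjesFunction.integral_sub_mul_signedCdf_sub f₁ f₂ hp hm hmass
end

section
/- Let p ∈ (2,∞), M ≥ 0, and let θ : ℝ → ℝ satisfy |θ(x)| ≤ M for all x ∈ ℝ and θ(b) − θ(a) = ∫_a^b g(s) ds for all a ≤ b, where g ∈ L^p(ℝ). For a measurable v : ℝ → ℝ set N(v)² := ∫_ℝ v(x)² dx + ∫∫_{ℝ×ℝ} ( (v(x) − v(y))/(x − y) )² dx dy (the squared H^{1/2}(ℝ) norm, with L² norm plus Gagliardo seminorm). Then for every u ∈ L²(ℝ) with N(u) < ∞: N(θ·u)² ≤ ( 19·M² + (4p/(p−2))·‖g‖²_{L^p(ℝ)} )·N(u)². In particular θ·u again has finite H^{1/2}(ℝ)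 norm. -/
/-!
By Hölder's inequality on `[y, x]`, `|θ x - θ y| ≤ ‖g‖_p |x - y| ^ (1 - 1/p)`. As this Hölder
exponent exceeds `1/2`, the kernel `((θ x - θ y) / (x - y))²` is dominated near the diagonal by
`‖g‖_p² |x - y| ^ (-2/p)`, which is integrable there, and away from it by `4M² |x - y| ^ (-2)`;
so `∫ ((θ x - θ y) / (x - y))² dy` is bounded uniformly in `x`. Writing
`θ x u x - θ y u y = θ y (u x - u y) + u x (θ x - θ y)`, the Gagliardo seminorm of `θ u` is then
controlled by `M²` times that of `u` plus, via Tonelli, the uniform kernel bound times `‖u‖₂²`.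
-/

open MeasureTheory Set
open scoped ENNReal

noncomputable def H12normSq (v : ℝ → ℝ) : ℝ≥0∞ :=
  (∫⁻ x : ℝ, ENNReal.ofReal (v x ^ 2)) +
    ∫⁻ q : ℝ × ℝ, ENNReal.ofReal (((v q.1 - v q.2) / (q.1 - q.2)) ^ 2)

theorem abs_intervalIntegral_le_eLpNorm_mul_rpow {g : ℝ → ℝ} {p : ℝ} (hp : 1 ≤ p)
    (hg : MemLp g (ENNReal.ofReal p)) {a b : ℝ} (hab : a ≤ b) :
    |∫ s in a..b, g s| ≤ (eLpNorm g (ENNReal.ofReal p)).toReal * (b - a) ^ (1 - 1 / p) := by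
  have hp0 : 0 < p := by linarith
  have hL1 : ‖∫ s in Ioc a b, g s‖ₑ ≤ eLpNorm g 1 (volume.restrict (Ioc a b)) := by
    rw [eLpNorm_one_eq_lintegral_enorm]; exact enorm_integral_le_lintegral_enorm _
  have hHolder := eLpNorm_le_eLpNorm_mul_rpow_measure_univ (p := 1) (q := ENNReal.ofReal p)
    (by simpa using hp) (hg.1.restrict (s := Ioc a b))
  rw [Measure.restrict_apply_univ, Real.volume_Ioc, ENNReal.toReal_one,
    ENNReal.toReal_ofReal hp0.le, one_div_one] at hHolder
  rw [intervalIntegral.integral_of_le hab, ← Real.norm_eq_abs, ← ENNReal.ofReal_le_ofReal_iff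
    (by positivity), ofReal_norm, ENNReal.ofReal_mul ENNReal.toReal_nonneg,
    ENNReal.ofReal_toReal hg.eLpNorm_ne_top, ← ENNReal.ofReal_rpow_of_nonneg (by linarith)
    (by rw [sub_nonneg]; exact div_le_one_of_le₀ hp hp0.le)]
  refine hL1.trans (hHolder.trans ?_)
  gcongr
  exact Measure.restrict_le_self

theorem abs_sub_le_eLpNorm_mul_rpow_of_eq_intervalIntegral {θ g : ℝ → ℝ} {p : ℝ} (hp : 1 ≤ p)
    (hg : MemLp g (ENNReal.ofReal p))
    (hθg : ∀ a b : ℝ, a ≤ b → θ b - θ a = ∫ s in a..b, g s) (x y : ℝ) :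
    |θ x - θ y| ≤ (eLpNorm g (ENNReal.ofReal p)).toReal * |x - y| ^ (1 - 1 / p) := by
  rcases le_total y x with h | h
  · rw [hθg y x h, abs_of_nonneg (sub_nonneg.2 h)]
    exact abs_intervalIntegral_le_eLpNorm_mul_rpow hp hg h
  · rw [abs_sub_comm, hθg x y h, abs_sub_comm, abs_of_nonneg (sub_nonneg.2 h)]
    exact abs_intervalIntegral_le_eLpNorm_mul_rpow hp hg h

theorem toReal_eLpNorm_sq_eq_integral_abs_rpow {g : ℝ → ℝ} {p : ℝ} (hp : 0 < p)
    (hg : MemLp g (ENNReal.ofReal p)) :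
    (eLpNorm g (ENNReal.ofReal p)).toReal ^ 2 = (∫ x, |g x| ^ p) ^ ((2 : ℝ) / p) := by
  have hI : 0 ≤ ∫ x, |g x| ^ p := integral_nonneg fun x => by positivity
  rw [hg.eLpNorm_eq_integral_rpow_norm (by simpa using hp) ENNReal.ofReal_ne_top,
    ENNReal.toReal_ofReal (by positivity), ENNReal.toReal_ofReal hp.le]
  simp only [Real.norm_eq_abs]
  rw [← Real.rpow_natCast, ← Real.rpow_mul hI]
  norm_num [div_eq_inv_mul]

theorem lintegral_comp_abs (F : ℝ → ℝ≥0∞) : ∫⁻ t, F |t| = 2 * ∫⁻ t in Ioi 0, F t := by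
  have hpos : ∫⁻ t in Ioi 0, F |t| = ∫⁻ t in Ioi 0, F t :=
    setLIntegral_congr_fun measurableSet_Ioi fun t ht => by rw [abs_of_pos ht]
  have hneg : ∫⁻ t in Iic 0, F |t| = ∫⁻ t in Ioi 0, F |t| := by
    have := (Measure.measurePreserving_neg (volume : Measure ℝ)).setLIntegral_comp_preimage_emb
      (Homeomorph.neg ℝ).measurableEmbedding (fun t => F |t|) (Ici 0)
    simp only [abs_neg, Set.neg_preimage, neg_Ici, neg_zero] at this
    rw [this, Measure.restrict_congr_set Ioi_ae_eq_Ici.symm]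
  rw [← lintegral_add_compl _ measurableSet_Ioi, compl_Ioi, hneg, hpos, two_mul]

theorem lintegral_Ioc_zero_one_rpow {s : ℝ} (hs : -1 < s) :
    ∫⁻ r in Ioc 0 1, ENNReal.ofReal (r ^ s) = ENNReal.ofReal (1 / (s + 1)) := by
  have hint : IntegrableOn (fun r : ℝ => r ^ s) (Ioc 0 1) := by
    rw [← intervalIntegrable_iff_integrableOn_Ioc_of_le zero_le_one]
    exact intervalIntegral.intervalIntegrable_rpow' hs
  rw [← ofReal_integral_eq_lintegral_ofReal hint
    ((ae_restrict_iff' measurableSet_Ioc).2 (ae_of_all _ fun r hr => Real.rpow_nonneg hr.1.le _)),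
    ← intervalIntegral.integral_of_le zero_le_one, integral_rpow (Or.inl hs),
    Real.one_rpow, Real.zero_rpow (by linarith), sub_zero]

theorem lintegral_Ioi_one_rpow {s : ℝ} (hs : s < -1) :
    ∫⁻ r in Ioi 1, ENNReal.ofReal (r ^ s) = ENNReal.ofReal (-1 / (s + 1)) := by
  rw [← ofReal_integral_eq_lintegral_ofReal (integrableOn_Ioi_rpow_of_lt hs one_pos)
    ((ae_restrict_iff' measurableSet_Ioi).2 (ae_of_all _ fun r hr =>
      Real.rpow_nonneg (zero_le_one.trans hr.le) _)),
    integral_Ioi_rpow_of_lt hs one_pos, Real.one_rpow]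

theorem sq_div_le_of_abs_le_mul_rpow {d t L α : ℝ} (ht : t ≠ 0) (hd : |d| ≤ L * |t| ^ α) :
    (d / t) ^ 2 ≤ L ^ 2 * |t| ^ (2 * α - 2) := by
  have htpos : 0 < |t| := abs_pos.2 ht
  calc (d / t) ^ 2 = |d| ^ 2 / |t| ^ 2 := by rw [div_pow, sq_abs, sq_abs]
    _ ≤ (L * |t| ^ α) ^ 2 / |t| ^ 2 := by gcongr
    _ = L ^ 2 * |t| ^ (2 * α - 2) := by
      rw [mul_pow, mul_div_assoc, ← Real.rpow_natCast (|t| ^ α), ← Real.rpow_natCast |t|,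
        ← Real.rpow_mul htpos.le, ← Real.rpow_sub htpos]
      norm_num [mul_comm]

theorem lintegral_sq_div_sub_le_of_holder {θ : ℝ → ℝ} {M L α : ℝ} (hα : 1 / 2 < α)
    (hθ : ∀ x, |θ x| ≤ M) (hθL : ∀ x y, |θ x - θ y| ≤ L * |x - y| ^ α) (x : ℝ) :
    ∫⁻ y, ENNReal.ofReal (((θ x - θ y) / (x - y)) ^ 2)
      ≤ ENNReal.ofReal (2 * L ^ 2 / (2 * α - 1) + 8 * M ^ 2) := by
  set near : ℝ → ℝ≥0∞ := (Iic 1).indicator fun r => ENNReal.ofReal (L ^ 2 * r ^ (2 * α - 2))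
  set far : ℝ → ℝ≥0∞ := (Ioi 1).indicator fun r => ENNReal.ofReal ((2 * M) ^ 2 * r ^ (-2 : ℝ))
  have hmajorant :
      ∀ y, ENNReal.ofReal (((θ x - θ y) / (x - y)) ^ 2) ≤ near |x - y| + far |x - y| := by
    intro y
    rcases eq_or_ne (x - y) 0 with hxy | hxy
    · simp [hxy]
    rcases le_or_gt |x - y| 1 with hnear | hfar
    · simp only [near, far, indicator_of_mem (mem_Iic.2 hnear),
        indicator_of_notMem (notMem_Ioi.2 hnear), add_zero]
      exact ENNReal.ofReal_le_ofReal (sq_div_le_of_abs_le_mul_rpow hxy (hθL x y))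
    · simp only [near, far, indicator_of_notMem (notMem_Iic.2 hfar),
        indicator_of_mem (mem_Ioi.2 hfar), zero_add]
      -- away from the diagonal, `|θ x - θ y| ≤ 2M` serves as a Hölder bound of exponent `0`
      refine ENNReal.ofReal_le_ofReal
        ((sq_div_le_of_abs_le_mul_rpow (L := 2 * M) (α := 0) hxy ?_).trans_eq (by norm_num))
      rw [Real.rpow_zero, mul_one]
      exact (abs_sub _ _).trans (by linarith [hθ x, hθ y])
  have hnear : ∫⁻ r in Ioi 0, near r = ENNReal.ofReal (L ^ 2 / (2 * α - 1)) := by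
    simp_rw [near, setLIntegral_indicator measurableSet_Iic, Iic_inter_Ioi,
      ENNReal.ofReal_mul (sq_nonneg L)]
    rw [lintegral_const_mul' _ _ ENNReal.ofReal_ne_top,
      lintegral_Ioc_zero_one_rpow (by linarith), ← ENNReal.ofReal_mul (sq_nonneg L)]
    ring_nf
  have hfar : ∫⁻ r in Ioi 0, far r = ENNReal.ofReal (4 * M ^ 2) := by
    simp_rw [far, setLIntegral_indicator measurableSet_Ioi, Ioi_inter_Ioi,
      max_eq_left zero_le_one, ENNReal.ofReal_mul (sq_nonneg (2 * M))]
    rw [lintegral_const_mul' _ _ ENNReal.ofReal_ne_top,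
      lintegral_Ioi_one_rpow (by norm_num), ← ENNReal.ofReal_mul (sq_nonneg _)]
    ring_nf
  calc ∫⁻ y, ENNReal.ofReal (((θ x - θ y) / (x - y)) ^ 2)
      ≤ ∫⁻ y, (near + far) |x - y| := lintegral_mono hmajorant
    _ = 2 * ∫⁻ r in Ioi 0, (near + far) r := by
      rw [lintegral_sub_left_eq_self (fun t => (near + far) |t|), lintegral_comp_abs]
    _ = ENNReal.ofReal (2 * L ^ 2 / (2 * α - 1) + 8 * M ^ 2) := by
      rw [Pi.add_def, lintegral_add_left (by measurability), hnear, hfar,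
        ← ENNReal.ofReal_add (div_nonneg (sq_nonneg L) (by linarith)) (by positivity),
        ← ENNReal.ofReal_ofNat 2, ← ENNReal.ofReal_mul zero_le_two]
      ring_nf

theorem sq_div_mul_sub_mul_le {a b c d M : ℝ} (t : ℝ) (hc : |c| ≤ M) :
    ((a * b - c * d) / t) ^ 2
      ≤ 2 * M ^ 2 * ((b - d) / t) ^ 2 + 2 * (b ^ 2 * ((a - c) / t) ^ 2) := by
  have hsplit : (a * b - c * d) / t = c * ((b - d) / t) + b * ((a - c) / t) := by ring
  have hc2 : c ^ 2 ≤ M ^ 2 := sq_le_sq' (abs_le.1 hc).1 (abs_le.1 hc).2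
  rw [hsplit]
  nlinarith [sq_nonneg (c * ((b - d) / t) - b * ((a - c) / t)), sq_nonneg ((b - d) / t)]

theorem H12normSq_mul_le {θ u : ℝ → ℝ} {M : ℝ} {C : ℝ≥0∞} (hθ : ∀ x, |θ x| ≤ M)
    (hθC : ∀ x, ∫⁻ y, ENNReal.ofReal (((θ x - θ y) / (x - y)) ^ 2) ≤ C) (hu : AEMeasurable u) :
    H12normSq (fun x => θ x * u x) ≤ (ENNReal.ofReal (2 * M ^ 2) + 2 * C) * H12normSq u := by
  set A := ∫⁻ x : ℝ, ENNReal.ofReal (u x ^ 2)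
  set B := ∫⁻ q : ℝ × ℝ, ENNReal.ofReal (((u q.1 - u q.2) / (q.1 - q.2)) ^ 2)
  have hL2 : ∫⁻ x, ENNReal.ofReal ((θ x * u x) ^ 2) ≤ ENNReal.ofReal (M ^ 2) * A := by
    rw [← lintegral_const_mul' _ _ ENNReal.ofReal_ne_top]
    refine lintegral_mono fun x => ?_
    rw [← ENNReal.ofReal_mul (sq_nonneg M), mul_pow]
    exact ENNReal.ofReal_le_ofReal (mul_le_mul_of_nonneg_right
      (sq_le_sq' (abs_le.1 (hθ x)).1 (abs_le.1 (hθ x)).2) (sq_nonneg _))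
  have hcross : ∫⁻ q : ℝ × ℝ, ENNReal.ofReal (u q.1 ^ 2)
      * ENNReal.ofReal (((θ q.1 - θ q.2) / (q.1 - q.2)) ^ 2) ≤ C * A := by
    calc _ ≤ ∫⁻ x, ∫⁻ y, ENNReal.ofReal (u x ^ 2)
          * ENNReal.ofReal (((θ x - θ y) / (x - y)) ^ 2) := lintegral_prod_le _
      _ ≤ ∫⁻ x, ENNReal.ofReal (u x ^ 2) * C := lintegral_mono fun x => by
          rw [lintegral_const_mul' _ _ ENNReal.ofReal_ne_top]; gcongr; exact hθC x
      _ = C * A := by rw [lintegral_mul_const'' _ (by fun_prop), mul_comm]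
  have hB_meas : AEMeasurable (fun q : ℝ × ℝ =>
      ENNReal.ofReal (2 * M ^ 2) * ENNReal.ofReal (((u q.1 - u q.2) / (q.1 - q.2)) ^ 2)) := by
    have h1 : AEMeasurable (fun q : ℝ × ℝ => u q.1) :=
      hu.comp_quasiMeasurePreserving Measure.quasiMeasurePreserving_fst
    have h2 : AEMeasurable (fun q : ℝ × ℝ => u q.2) :=
      hu.comp_quasiMeasurePreserving Measure.quasiMeasurePreserving_snd
    fun_prop
  have hGag : ∫⁻ q : ℝ × ℝ, ENNReal.ofReal (((θ q.1 * u q.1 - θ q.2 * u q.2) / (q.1 - q.2)) ^ 2)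
      ≤ ENNReal.ofReal (2 * M ^ 2) * B + 2 * (C * A) := by
    calc _ ≤ ∫⁻ q : ℝ × ℝ, (ENNReal.ofReal (2 * M ^ 2)
            * ENNReal.ofReal (((u q.1 - u q.2) / (q.1 - q.2)) ^ 2)
          + 2 * (ENNReal.ofReal (u q.1 ^ 2)
            * ENNReal.ofReal (((θ q.1 - θ q.2) / (q.1 - q.2)) ^ 2))) := by
          refine lintegral_mono fun q => (ENNReal.ofReal_le_ofReal
            (sq_div_mul_sub_mul_le (q.1 - q.2) (hθ q.2))).trans_eq ?_
          rw [ENNReal.ofReal_add (by positivity) (by positivity)]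
          congr 1
          · exact ENNReal.ofReal_mul (by positivity)
          · rw [ENNReal.ofReal_mul zero_le_two, ENNReal.ofReal_mul (sq_nonneg _),
              ENNReal.ofReal_ofNat]
      _ = ENNReal.ofReal (2 * M ^ 2) * B + 2 * ∫⁻ q : ℝ × ℝ, ENNReal.ofReal (u q.1 ^ 2)
            * ENNReal.ofReal (((θ q.1 - θ q.2) / (q.1 - q.2)) ^ 2) := by
          rw [lintegral_add_left' hB_meas, lintegral_const_mul' _ _ ENNReal.ofReal_ne_top,
            lintegral_const_mul' _ _ ENNReal.ofNat_ne_top]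
      _ ≤ _ := by gcongr
  calc H12normSq (fun x => θ x * u x)
      ≤ ENNReal.ofReal (M ^ 2) * A + (ENNReal.ofReal (2 * M ^ 2) * B + 2 * (C * A)) :=
        add_le_add hL2 hGag
    _ ≤ ENNReal.ofReal (2 * M ^ 2) * A + (ENNReal.ofReal (2 * M ^ 2) * B + 2 * (C * A)) := by
        gcongr; linarith [sq_nonneg M]
    _ ≤ ENNReal.ofReal (2 * M ^ 2) * A + (ENNReal.ofReal (2 * M ^ 2) * B + 2 * (C * A))
        + 2 * (C * B) := le_self_add
    _ = (ENNReal.ofReal (2 * M ^ 2) + 2 * C) * H12normSq u := by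
        rw [show H12normSq u = A + B from rfl]; ring

theorem stmt11_general (p M : ℝ) (hp : 2 < p)
    (θ g : ℝ → ℝ)
    (hθ_bdd : ∀ x, |θ x| ≤ M)
    (hg_Lp : MemLp g (ENNReal.ofReal p) (volume : Measure ℝ))
    (hθg : ∀ a b : ℝ, a ≤ b → θ b - θ a = ∫ s in a..b, g s)
    (u : ℝ → ℝ) (hu_L2 : MemLp u 2 (volume : Measure ℝ))
    (hu_fin : H12normSq u < ⊤) :
    H12normSq (fun x => θ x * u x)
      ≤ ENNReal.ofReal
          (19 * M ^ 2 + (4 * p / (p - 2)) * ((∫ x : ℝ, |g x| ^ p) ^ ((2:ℝ) / p)))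
        * H12normSq u ∧
    H12normSq (fun x => θ x * u x) < ⊤ := by
  set K := (eLpNorm g (ENNReal.ofReal p)).toReal
  have hα : 1 / 2 < 1 - 1 / p := by
    have : 1 / p < 1 / 2 := one_div_lt_one_div_of_lt two_pos hp
    linarith
  have hkernel := lintegral_sq_div_sub_le_of_holder hα hθ_bdd
    (abs_sub_le_eLpNorm_mul_rpow_of_eq_intervalIntegral (by linarith) hg_Lp hθg)
  have hconst : ENNReal.ofReal (2 * M ^ 2)
        + 2 * ENNReal.ofReal (2 * K ^ 2 / (2 * (1 - 1 / p) - 1) + 8 * M ^ 2)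
      ≤ ENNReal.ofReal (19 * M ^ 2 + (4 * p / (p - 2)) * K ^ 2) := by
    have hp_coef : 0 ≤ 2 * p / (p - 2) := div_nonneg (by linarith) (by linarith)
    have hcoef : 2 * K ^ 2 / (2 * (1 - 1 / p) - 1) = 2 * p / (p - 2) * K ^ 2 := by
      rw [show 2 * (1 - 1 / p) - 1 = (p - 2) / p by field_simp; ring, div_div_eq_mul_div]
      ring
    rw [hcoef, ← ENNReal.ofReal_ofNat 2, ← ENNReal.ofReal_mul zero_le_two,
      ← ENNReal.ofReal_add (by positivity) (by positivity)]
    refine ENNReal.ofReal_le_ofReal ?_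
    linarith [sq_nonneg M, show 4 * p / (p - 2) * K ^ 2 = 2 * (2 * p / (p - 2) * K ^ 2) by ring]
  rw [← toReal_eLpNorm_sq_eq_integral_abs_rpow (by linarith) hg_Lp]
  have hbound := (H12normSq_mul_le hθ_bdd hkernel hu_L2.1.aemeasurable).trans
    (mul_le_mul_left hconst _)
  exact ⟨hbound, hbound.trans_lt (ENNReal.mul_lt_top ENNReal.ofReal_lt_top hu_fin)⟩

/-- Bounded functions `θ` with `θ' ∈ Lᵖ(ℝ)`, `p > 2`, are
multipliers of `H^{1/2}(ℝ)`:
`N(θu)² ≤ (19M² + (4p/(p-2))‖g‖²_{Lᵖ})·N(u)²`, where `|θ| ≤ M` and `θ' = g`. -/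
theorem stmt11 (p M : ℝ) (hp : 2 < p) (hM : 0 ≤ M)
    (θ g : ℝ → ℝ)
    (hθ_bdd : ∀ x, |θ x| ≤ M)
    (hg_Lp : MemLp g (ENNReal.ofReal p) (volume : Measure ℝ))
    (hθg : ∀ a b : ℝ, a ≤ b → θ b - θ a = ∫ s in a..b, g s)
    (u : ℝ → ℝ) (hu_L2 : MemLp u 2 (volume : Measure ℝ))
    (hu_fin : H12normSq u < ⊤) :
    H12normSq (fun x => θ x * u x)
      ≤ ENNReal.ofReal
          (19 * M ^ 2 + (4 * p / (p - 2)) * ((∫ x : ℝ, |g x| ^ p) ^ ((2:ℝ) / p)))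
        * H12normSq u ∧
    H12normSq (fun x => θ x * u x) < ⊤ :=
  stmt11_general p M hp θ g hθ_bdd hg_Lp hθg u hu_L2 hu_fin
end
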